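/- arXiv:1706.01781 — 5 statements merged into one kernel-verified Lean document; each statement's English description precedes it below -/
import Mathlib

section
/- Let α be a nonzero real number and let X = F(α·1, 0, 0)/α scaled, i.e., X is the diagonal matrix diag(1, −1). Then the adjoint orbit of αX under G = SL(2,ℝ), namely { g(αX)g⁻¹ : g ∈ SL(2,ℝ) }, equals the one-sheeted hyperboloid { F(x,y,z) : x, y, z ∈ ℝ, x² + y² − z² = α² }. -/
/-- The matrix `F(x,y,z)` with rows `(x, y+z)` and `(y−z, −x)`, an element of `𝔰𝔩(2,ℝ)`. -/
def F (x y z : ℝ) : Matrix (Fin 2) (Fin 2) ℝ := !![x, y + z; y - z, -x]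

/-- `X = diag(1, −1)`. -/
def X : Matrix (Fin 2) (Fin 2) ℝ := !![1, 0; 0, -1]

/-!
Conjugation preserves trace and determinant, and a trace-zero matrix `F x y z` has determinant
`-(x² + y² - z²)`, so the orbit lies on the hyperboloid. Conversely, a point `F x y z` of the
hyperboloid has the two eigenvalues `±α`; a matrix whose columns are eigenvectors for `α` and
`-α`, normalised to determinant one, conjugates `αX` to it. The explicit eigenvector formula
breaks down only at `x = -α`, where one exchanges `α` and `-α`: the quarter turn conjugates
`αX` to `-αX`.
-/

open Matrix
open scoped MatrixGroups

namespace Matrix.SpecialLinearGroup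

variable {n R : Type*} [Fintype n] [DecidableEq n] [CommRing R]

lemma trace_conj (g : SpecialLinearGroup n R) (M : Matrix n n R) :
    trace ((g : Matrix n n R) * M * ((g⁻¹ : SpecialLinearGroup n R) : Matrix n n R)) =
      trace M := by
  rw [trace_mul_cycle, ← coe_mul, inv_mul_cancel, coe_one, one_mul]

lemma det_conj (g : SpecialLinearGroup n R) (M : Matrix n n R) :
    det ((g : Matrix n n R) * M * ((g⁻¹ : SpecialLinearGroup n R) : Matrix n n R)) =
      det M := by
  simp only [det_mul, det_coe, one_mul, mul_one]

lemma eq_conj_of_mul_eq {A M : Matrix n n R} {g : SpecialLinearGroup n R}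
    (h : A * (g : Matrix n n R) = g * M) :
    A = (g : Matrix n n R) * M * ((g⁻¹ : SpecialLinearGroup n R) : Matrix n n R) := by
  rw [← h, mul_assoc, ← coe_mul, mul_inv_cancel, coe_one, mul_one]

end Matrix.SpecialLinearGroup

lemma det_F (x y z : ℝ) : det (F x y z) = -(x ^ 2 + y ^ 2 - z ^ 2) := by
  rw [F, det_fin_two_of]
  ring

lemma eq_F_of_trace_eq_zero {A : Matrix (Fin 2) (Fin 2) ℝ} (h : trace A = 0) :
    A = F (A 0 0) ((A 0 1 + A 1 0) / 2) ((A 0 1 - A 1 0) / 2) := by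
  rw [trace_fin_two] at h
  ext i j
  fin_cases i <;> fin_cases j <;> simp [F] <;> linarith

lemma exists_F_mul_eq_mul_smul_X_of_add_ne_zero {x y z c : ℝ} (hc : c ≠ 0)
    (h : x ^ 2 + y ^ 2 - z ^ 2 = c ^ 2) (hx : x + c ≠ 0) :
    ∃ g : SL(2, ℝ), F x y z * g = g * (c • X) := by
  -- the columns are the eigenvectors `(x + c, y - z)` for `c` and `(-(y + z), x + c)` for `-c`
  refine ⟨⟨!![1, -(y + z) / (2 * c); (y - z) / (x + c), (x + c) / (2 * c)], ?_⟩, ?_⟩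
  · rw [det_fin_two_of]
    field_simp
    linear_combination h
  · ext i j
    fin_cases i <;> fin_cases j <;> simp [F, X, mul_apply, Fin.sum_univ_two] <;> field_simp
    · linear_combination h
    · ring
    · ring
    · linear_combination -h

lemma exists_smul_X_mul_eq_mul_neg_smul_X (c : ℝ) :
    ∃ w : SL(2, ℝ), (c • X) * w = w * (-c • X) := by
  refine ⟨⟨!![0, -1; 1, 0], by simp [det_fin_two_of]⟩, ?_⟩
  ext i j
  fin_cases i <;> fin_cases j <;> simp [X, mul_apply, Fin.sum_univ_two]

lemma exists_F_mul_eq_mul_smul_X {x y z c : ℝ} (hc : c ≠ 0)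
    (h : x ^ 2 + y ^ 2 - z ^ 2 = c ^ 2) :
    ∃ g : SL(2, ℝ), F x y z * g = g * (c • X) := by
  by_cases hx : x + c = 0
  · have hx' : x + -c ≠ 0 := fun h' ↦ hc (by linarith)
    obtain ⟨g, hg⟩ := exists_F_mul_eq_mul_smul_X_of_add_ne_zero (x := x) (y := y) (z := z)
      (neg_ne_zero.mpr hc) (by rwa [neg_sq]) hx'
    obtain ⟨w, hw⟩ := exists_smul_X_mul_eq_mul_neg_smul_X (-c)
    rw [neg_neg] at hw
    refine ⟨g * w, ?_⟩
    rw [Matrix.SpecialLinearGroup.coe_mul, ← mul_assoc, hg, mul_assoc, hw, mul_assoc]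
  · exact exists_F_mul_eq_mul_smul_X_of_add_ne_zero hc h hx

/-- For a nonzero real number `α`, the adjoint `SL(2,ℝ)`-orbit of `αX` is the one-sheeted
hyperboloid `{F(x,y,z) : x² + y² − z² = α²}`. -/
theorem adjoint_orbit_X (α : ℝ) (hα : α ≠ 0) :
    {A : Matrix (Fin 2) (Fin 2) ℝ | ∃ g : Matrix.SpecialLinearGroup (Fin 2) ℝ,
        A = (g : Matrix (Fin 2) (Fin 2) ℝ) * (α • X) * ((g⁻¹ : Matrix.SpecialLinearGroup (Fin 2) ℝ) : Matrix (Fin 2) (Fin 2) ℝ)} =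
    {A : Matrix (Fin 2) (Fin 2) ℝ |
        ∃ x y z : ℝ, x ^ 2 + y ^ 2 - z ^ 2 = α ^ 2 ∧ A = F x y z} := by
  ext A
  constructor
  · rintro ⟨g, rfl⟩
    have htr : trace (α • X) = 0 := by simp [X, trace_fin_two]
    have hdet : det (α • X) = -α ^ 2 := by simp [X, det_fin_two_of]; ring
    rw [← SpecialLinearGroup.trace_conj g] at htr
    rw [← SpecialLinearGroup.det_conj g, eq_F_of_trace_eq_zero htr, det_F] at hdet
    exact ⟨_, _, _, by linarith, eq_F_of_trace_eq_zero htr⟩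
  · rintro ⟨x, y, z, h, rfl⟩
    obtain ⟨g, hg⟩ := exists_F_mul_eq_mul_smul_X hα h
    exact ⟨g, SpecialLinearGroup.eq_conj_of_mul_eq hg⟩
end

section
/- Let α be a positive real number and let Z be the matrix with rows (0, 1) and (−1, 0). Then the adjoint orbit of αZ under G = SL(2,ℝ), namely { g(αZ)g⁻¹ : g ∈ SL(2,ℝ) }, equals the sheet { F(x,y,z) : x, y, z ∈ ℝ, x² + y² − z² = −α², z > 0 } of the two-sheeted hyperboloid x² + y² − z² = −α². -/
/-- `Z` is the matrix with rows `(0, 1)` and `(−1, 0)`. -/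
def Z : Matrix (Fin 2) (Fin 2) ℝ := !![0, 1; -1, 0]

/-!
Conjugating `αZ` by `g = !![a, b; c, d]` gives `F(x,y,z)` with `x = −α(ac + bd)`,
`y + z = α(a² + b²)` and `y − z = −α(c² + d²)`. Hence `x² + y² − z² = −α²(ad − bc)² = −α²` and
`z = α(a² + b² + c² + d²)/2 > 0`. Conversely, on the upper sheet `(z − y)(z + y) = x² + α² > 0`
with `(z − y) + (z + y) = 2z > 0`, so `y + z > 0`, and the lower triangular
`g = !![s, 0; −x/(αs), 1/s]` with `αs² = y + z` conjugates `αZ` to `F(x,y,z)`.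
-/

open Matrix
open scoped MatrixGroups

lemma mul_smul_Z_mul_adjugate (M : Matrix (Fin 2) (Fin 2) ℝ) (α : ℝ) :
    M * (α • Z) * M.adjugate =
      F (-α * (M 0 0 * M 1 0 + M 0 1 * M 1 1))
        (α * (M 0 0 ^ 2 + M 0 1 ^ 2 - M 1 0 ^ 2 - M 1 1 ^ 2) / 2)
        (α * (M 0 0 ^ 2 + M 0 1 ^ 2 + M 1 0 ^ 2 + M 1 1 ^ 2) / 2) := by
  ext i j
  fin_cases i <;> fin_cases j <;>
    simp [F, Z, adjugate_fin_two, mul_apply, Fin.sum_univ_two] <;> ring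

variable {α : ℝ}

lemma conj_smul_Z_mem_upper_sheet (hα : 0 < α) (g : SL(2, ℝ)) :
    ∃ x y z : ℝ, x ^ 2 + y ^ 2 - z ^ 2 = -α ^ 2 ∧ 0 < z ∧
      (g : Matrix (Fin 2) (Fin 2) ℝ) * (α • Z) * ((g⁻¹ : SL(2, ℝ)) : Matrix (Fin 2) (Fin 2) ℝ) =
        F x y z := by
  rw [Matrix.SpecialLinearGroup.coe_inv, mul_smul_Z_mul_adjugate]
  have hdet : g 0 0 * g 1 1 - g 0 1 * g 1 0 = 1 := by rw [← det_fin_two]; exact g.det_coe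
  refine ⟨_, _, _, ?_, ?_, rfl⟩
  · linear_combination (-α ^ 2 * (g 0 0 * g 1 1 - g 0 1 * g 1 0 + 1)) * hdet
  · have hsum : 0 < g 0 0 ^ 2 + g 0 1 ^ 2 + g 1 0 ^ 2 + g 1 1 ^ 2 := by
      nlinarith [sq_nonneg (g 0 0 - g 1 1), sq_nonneg (g 0 1 + g 1 0)]
    positivity

lemma add_pos_of_mem_upper_sheet (hα : 0 < α) {x y z : ℝ} (hxyz : x ^ 2 + y ^ 2 - z ^ 2 = -α ^ 2)
    (hz : 0 < z) : 0 < y + z := by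
  nlinarith [sq_nonneg x, mul_pos hα hα]

lemma exists_conj_smul_Z_eq_F (hα : 0 < α) {x y z : ℝ} (hxyz : x ^ 2 + y ^ 2 - z ^ 2 = -α ^ 2)
    (hz : 0 < z) :
    ∃ g : SL(2, ℝ), F x y z =
      (g : Matrix (Fin 2) (Fin 2) ℝ) * (α • Z) * ((g⁻¹ : SL(2, ℝ)) : Matrix (Fin 2) (Fin 2) ℝ) := by
  have hyz := add_pos_of_mem_upper_sheet hα hxyz hz
  obtain ⟨s, hs, hss⟩ : ∃ s : ℝ, 0 < s ∧ α * s ^ 2 = y + z :=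
    ⟨√((y + z) / α), by positivity, by rw [Real.sq_sqrt (by positivity)]; field_simp⟩
  have hdet : det !![s, 0; -x / (α * s), s⁻¹] = 1 := by
    rw [det_fin_two_of]; field_simp; ring
  obtain ⟨g, hg⟩ : ∃ g : SL(2, ℝ), (g : Matrix (Fin 2) (Fin 2) ℝ) = !![s, 0; -x / (α * s), s⁻¹] :=
    ⟨⟨_, hdet⟩, rfl⟩
  refine ⟨g, ?_⟩
  rw [Matrix.SpecialLinearGroup.coe_inv, mul_smul_Z_mul_adjugate, hg]
  simp only [of_apply, cons_val', cons_val_zero, cons_val_one, empty_val', cons_val_fin_one]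
  congr 1 <;> field_simp
  · ring
  · linear_combination hxyz - (α * s ^ 2 - y + z) * hss
  · linear_combination -hxyz - (α * s ^ 2 + y - z) * hss

/-- For a positive real number `α`, the adjoint `SL(2,ℝ)`-orbit of `αZ` is the sheet
`{F(x,y,z) : x² + y² − z² = −α², z > 0}` of the two-sheeted hyperboloid. -/
theorem adjoint_orbit_Z (α : ℝ) (hα : 0 < α) :
    {A : Matrix (Fin 2) (Fin 2) ℝ | ∃ g : Matrix.SpecialLinearGroup (Fin 2) ℝ,
        A = (g : Matrix (Fin 2) (Fin 2) ℝ) * (α • Z) * ((g⁻¹ : Matrix.SpecialLinearGroup (Fin 2) ℝ) : Matrix (Fin 2) (Fin 2) ℝ)} =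
    {A : Matrix (Fin 2) (Fin 2) ℝ |
        ∃ x y z : ℝ, x ^ 2 + y ^ 2 - z ^ 2 = -α ^ 2 ∧ 0 < z ∧ A = F x y z} := by
  ext A
  constructor
  · rintro ⟨g, rfl⟩
    exact conj_smul_Z_mem_upper_sheet hα g
  · rintro ⟨x, y, z, hxyz, hz, rfl⟩
    exact exists_conj_smul_Z_eq_F hα hxyz hz
end

section
/- Let α be a positive real number and let S be the matrix with rows (0, 1) and (0, 0). Then the adjoint orbit of αS under G = SL(2,ℝ), namely { g(αS)g⁻¹ : g ∈ SL(2,ℝ) }, equals the upper one-sheeted cone { F(x,y,z) : x, y, z ∈ ℝ, x² + y² − z² = 0, z > 0 }. -/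
/-- `S` is the matrix with rows `(0, 1)` and `(0, 0)`. -/
def S : Matrix (Fin 2) (Fin 2) ℝ := !![0, 1; 0, 0]

lemma exists_euclid_param_of_sq_add_sq_eq_sq {u v r : ℝ} (h : u ^ 2 + v ^ 2 = r ^ 2) (hr : 0 ≤ r) :
    ∃ a c : ℝ, a ^ 2 - c ^ 2 = u ∧ 2 * a * c = v ∧ a ^ 2 + c ^ 2 = r := by
  -- `a + ci` is a square root of `u + vi`.
  obtain ⟨ζ, hζ⟩ := IsAlgClosed.exists_pow_nat_eq (⟨u, v⟩ : ℂ) two_pos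
  have hu : ζ.re ^ 2 - ζ.im ^ 2 = u := by simpa [sq] using congrArg Complex.re hζ
  have hv : 2 * ζ.re * ζ.im = v := by
    rw [← show (ζ ^ 2).im = v by rw [hζ]]; simp only [sq, Complex.mul_im]; ring
  refine ⟨ζ.re, ζ.im, hu, hv, ?_⟩
  have hsq : (ζ.re ^ 2 + ζ.im ^ 2) ^ 2 = r ^ 2 := by
    rw [← h, ← hu, ← hv]; ring
  exact (pow_left_inj₀ (by positivity) hr two_ne_zero).mp hsq

namespace Matrix.SpecialLinearGroup

lemma exists_col_eq {K : Type*} [Field K] (a c : K) (h : a ^ 2 + c ^ 2 ≠ 0) :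
    ∃ g : SpecialLinearGroup (Fin 2) K,
      (g : Matrix (Fin 2) (Fin 2) K) 0 0 = a ∧ (g : Matrix (Fin 2) (Fin 2) K) 1 0 = c :=
  ⟨⟨!![a, -c / (a ^ 2 + c ^ 2); c, a / (a ^ 2 + c ^ 2)], by
    rw [det_fin_two_of]; field_simp; ring⟩, rfl, rfl⟩

lemma sq_add_sq_col_pos (g : SpecialLinearGroup (Fin 2) ℝ) :
    0 < (g : Matrix (Fin 2) (Fin 2) ℝ) 0 0 ^ 2 + (g : Matrix (Fin 2) (Fin 2) ℝ) 1 0 ^ 2 := by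
  have hdet := g.det_coe
  rw [det_fin_two] at hdet
  by_contra! hle
  have h0 : g 0 0 = 0 := by nlinarith
  have h1 : g 1 0 = 0 := by nlinarith
  simp [h0, h1] at hdet

lemma conj_smul_S (g : SpecialLinearGroup (Fin 2) ℝ) (α : ℝ) :
    let a := (g : Matrix (Fin 2) (Fin 2) ℝ) 0 0
    let c := (g : Matrix (Fin 2) (Fin 2) ℝ) 1 0
    (g : Matrix (Fin 2) (Fin 2) ℝ) * (α • S) *
        ((g⁻¹ : SpecialLinearGroup (Fin 2) ℝ) : Matrix (Fin 2) (Fin 2) ℝ) =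
      F (-(α * (a * c))) (α * (a ^ 2 - c ^ 2) / 2) (α * (a ^ 2 + c ^ 2) / 2) := by
  rw [coe_inv]
  ext i j
  fin_cases i <;> fin_cases j <;>
    simp [F, S, mul_apply, Fin.sum_univ_two, adjugate_fin_two] <;> ring

end Matrix.SpecialLinearGroup

/-- For a positive real number `α`, the adjoint `SL(2,ℝ)`-orbit of `αS` is the upper
one-sheeted cone `{F(x,y,z) : x² + y² − z² = 0, z > 0}`. -/
theorem adjoint_orbit_S (α : ℝ) (hα : 0 < α) :
    {A : Matrix (Fin 2) (Fin 2) ℝ | ∃ g : Matrix.SpecialLinearGroup (Fin 2) ℝ,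
        A = (g : Matrix (Fin 2) (Fin 2) ℝ) * (α • S) * ((g⁻¹ : Matrix.SpecialLinearGroup (Fin 2) ℝ) : Matrix (Fin 2) (Fin 2) ℝ)} =
    {A : Matrix (Fin 2) (Fin 2) ℝ |
        ∃ x y z : ℝ, x ^ 2 + y ^ 2 - z ^ 2 = 0 ∧ 0 < z ∧ A = F x y z} := by
  ext A
  constructor
  · rintro ⟨g, rfl⟩
    have hcol := Matrix.SpecialLinearGroup.sq_add_sq_col_pos g
    exact ⟨_, _, _, by ring, by positivity, Matrix.SpecialLinearGroup.conj_smul_S g α⟩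
  · rintro ⟨x, y, z, hcone, hz, rfl⟩
    obtain ⟨a, c, hu, hv, hr⟩ := exists_euclid_param_of_sq_add_sq_eq_sq
      (u := 2 * y / α) (v := -2 * x / α) (r := 2 * z / α)
      (by field_simp; linear_combination hcone) (by positivity)
    obtain ⟨g, rfl, rfl⟩ := Matrix.SpecialLinearGroup.exists_col_eq a c (by rw [hr]; positivity)
    refine ⟨g, ?_⟩
    rw [Matrix.SpecialLinearGroup.conj_smul_S]
    congr 1 <;> field_simp at hu hv hr ⊢ <;> linarith
end

section
/- Let α be a positive real number and let T be the matrix with rows (0, 0) and (1, 0). Then the adjoint orbit of αT under G = SL(2,ℝ), namely { g(αT)g⁻¹ : g ∈ SL(2,ℝ) }, equals the lower one-sheeted cone { F(x,y,z) : x, y, z ∈ ℝ, x² + y² − z² = 0, z < 0 }; moreover for α < 0 the orbit of αT equals the upper cone { F(x,y,z) : x² + y² − z² = 0, z > 0 }. -/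
/-- `T` is the matrix with rows `(0, 0)` and `(1, 0)`. -/
def T : Matrix (Fin 2) (Fin 2) ℝ := !![0, 0; 1, 0]

/-!
Since `T = e₂ e₁ᵀ`, the conjugate `g (αT) g⁻¹` is `α v wᵀ`, where `v = (b, d)` is the second
column of `g` and `wᵀ = (d, −b)` the first row of `g⁻¹`; that is, `F(αbd, α(d² − b²)/2,
−α(b² + d²)/2)`. Every nonzero `v` is the second column of some `g ∈ SL(2,ℝ)`, so the orbit is
the image of `ℝ² ∖ 0` under this quadratic map. Identifying `(d, b)` with `w = d + ib`, the map
is `w ↦ (α/2) w²` in the coordinate `y + ix`, with `z = −(α/2)|w|²`; since every complex number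
is a square, the image is the half of the cone on which `αz < 0`.
-/

open scoped MatrixGroups

lemma mul_smul_T_mul_inv (α : ℝ) (g : SL(2, ℝ)) :
    (g : Matrix (Fin 2) (Fin 2) ℝ) * (α • T) * ((g⁻¹ : SL(2, ℝ)) : Matrix (Fin 2) (Fin 2) ℝ) =
      F (α * (g 0 1 * g 1 1)) (α * (g 1 1 ^ 2 - g 0 1 ^ 2) / 2)
        (-(α * (g 0 1 ^ 2 + g 1 1 ^ 2) / 2)) := by
  rw [Matrix.SpecialLinearGroup.coe_inv]
  ext i j
  fin_cases i <;> fin_cases j <;>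
    simp [F, T, Matrix.adjugate_fin_two, Matrix.mul_apply, Fin.sum_univ_two] <;> ring

lemma sq_add_sq_second_col_pos (g : SL(2, ℝ)) : 0 < g 0 1 ^ 2 + g 1 1 ^ 2 := by
  have hdet : g 0 0 * g 1 1 - g 0 1 * g 1 0 = 1 := by
    rw [← Matrix.det_fin_two]
    exact g.det_coe
  nlinarith [sq_nonneg (g 0 0 * g 0 1 + g 1 0 * g 1 1), sq_nonneg (g 0 0), sq_nonneg (g 1 0)]

lemma exists_SL2_second_col_eq {b d : ℝ} (h : b ^ 2 + d ^ 2 ≠ 0) :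
    ∃ g : SL(2, ℝ), g 0 1 = b ∧ g 1 1 = d := by
  have hdet : (!![d / (b ^ 2 + d ^ 2), b; -b / (b ^ 2 + d ^ 2), d]).det = 1 := by
    rw [Matrix.det_fin_two_of]
    field_simp
    ring
  exact ⟨⟨_, hdet⟩, rfl, rfl⟩

lemma exists_sq_sub_sq_eq_and_two_mul_eq (p q : ℝ) : ∃ b d : ℝ, d ^ 2 - b ^ 2 = p ∧ 2 * b * d = q := by
  obtain ⟨w, hw⟩ := IsAlgClosed.exists_pow_nat_eq (⟨p, q⟩ : ℂ) two_pos
  refine ⟨w.im, w.re, ?_, ?_⟩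
  · simpa [sq] using congrArg Complex.re hw
  · have := congrArg Complex.im hw
    simp only [sq, Complex.mul_im] at this
    linarith

lemma exists_sq_param_of_mem_cone {α x y z : ℝ} (hα : α ≠ 0) (hcone : x ^ 2 + y ^ 2 - z ^ 2 = 0)
    (hz : α * z < 0) :
    ∃ b d : ℝ, x = α * (b * d) ∧ y = α * (d ^ 2 - b ^ 2) / 2 ∧ z = -(α * (b ^ 2 + d ^ 2) / 2) ∧
      b ^ 2 + d ^ 2 ≠ 0 := by
  obtain ⟨b, d, hy, hx⟩ := exists_sq_sub_sq_eq_and_two_mul_eq (2 * y / α) (2 * x / α)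
  have hsq : (b ^ 2 + d ^ 2) ^ 2 = (-(2 * z / α)) ^ 2 := by
    calc (b ^ 2 + d ^ 2) ^ 2 = (d ^ 2 - b ^ 2) ^ 2 + (2 * b * d) ^ 2 := by ring
      _ = _ := by rw [hy, hx]; field_simp; linear_combination hcone
  have hpos : 0 < -(2 * z / α) := by
    rw [show -(2 * z / α) = -2 * (α * z) / α ^ 2 by field_simp]
    exact div_pos (by linarith) (by positivity)
  have hnorm : b ^ 2 + d ^ 2 = -(2 * z / α) :=
    (pow_left_inj₀ (by positivity) hpos.le two_ne_zero).1 hsq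
  refine ⟨b, d, ?_, ?_, ?_, hnorm ▸ hpos.ne'⟩
  · field_simp at hx; linarith
  · field_simp at hy; linarith
  · rw [hnorm]; field_simp

theorem adjoint_orbit_smul_T_eq_cone {α : ℝ} (hα : α ≠ 0) :
    {A : Matrix (Fin 2) (Fin 2) ℝ | ∃ g : SL(2, ℝ),
        A = (g : Matrix (Fin 2) (Fin 2) ℝ) * (α • T) * ((g⁻¹ : SL(2, ℝ)) : Matrix (Fin 2) (Fin 2) ℝ)} =
      {A | ∃ x y z : ℝ, x ^ 2 + y ^ 2 - z ^ 2 = 0 ∧ α * z < 0 ∧ A = F x y z} := by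
  ext A
  constructor
  · rintro ⟨g, rfl⟩
    refine ⟨_, _, _, by ring, ?_, mul_smul_T_mul_inv α g⟩
    have := sq_add_sq_second_col_pos g
    have : 0 < α ^ 2 := by positivity
    nlinarith
  · rintro ⟨x, y, z, hcone, hz, rfl⟩
    obtain ⟨b, d, rfl, rfl, rfl, hbd⟩ := exists_sq_param_of_mem_cone hα hcone hz
    obtain ⟨g, rfl, rfl⟩ := exists_SL2_second_col_eq hbd
    exact ⟨g, (mul_smul_T_mul_inv α g).symm⟩

/-- For a positive real number `α`, the adjoint `SL(2,ℝ)`-orbit of `αT` is the lower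
one-sheeted cone `{F(x,y,z) : x² + y² − z² = 0, z < 0}`; moreover for `α < 0` the orbit
of `αT` is the upper one-sheeted cone `{F(x,y,z) : x² + y² − z² = 0, z > 0}`. -/
theorem adjoint_orbit_T (α : ℝ) (hα : 0 < α) :
    ({A : Matrix (Fin 2) (Fin 2) ℝ | ∃ g : Matrix.SpecialLinearGroup (Fin 2) ℝ,
        A = (g : Matrix (Fin 2) (Fin 2) ℝ) * (α • T) * ((g⁻¹ : Matrix.SpecialLinearGroup (Fin 2) ℝ) : Matrix (Fin 2) (Fin 2) ℝ)} =
      {A : Matrix (Fin 2) (Fin 2) ℝ |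
        ∃ x y z : ℝ, x ^ 2 + y ^ 2 - z ^ 2 = 0 ∧ z < 0 ∧ A = F x y z}) ∧
    ∀ β : ℝ, β < 0 →
      ({A : Matrix (Fin 2) (Fin 2) ℝ | ∃ g : Matrix.SpecialLinearGroup (Fin 2) ℝ,
          A = (g : Matrix (Fin 2) (Fin 2) ℝ) * (β • T) * ((g⁻¹ : Matrix.SpecialLinearGroup (Fin 2) ℝ) : Matrix (Fin 2) (Fin 2) ℝ)} =
        {A : Matrix (Fin 2) (Fin 2) ℝ |
          ∃ x y z : ℝ, x ^ 2 + y ^ 2 - z ^ 2 = 0 ∧ 0 < z ∧ A = F x y z}) := by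
  refine ⟨?_, fun β hβ => ?_⟩
  · rw [adjoint_orbit_smul_T_eq_cone hα.ne']
    simp only [mul_neg_iff, hα, true_and, hα.not_gt, false_and, or_false]
  · rw [adjoint_orbit_smul_T_eq_cone hβ.ne]
    simp only [mul_neg_iff, hβ.not_gt, false_and, hβ, true_and, false_or]
end

section
/- Let ω = φ ∘ exp : 𝔰𝔩(2,ℝ) → ℍ, where exp is the matrix exponential (which maps 𝔰𝔩(2,ℝ) into SL(2,ℝ)) and φ : SL(2,ℝ) → ℍ sends g with rows (a, b) and (c, d) to (ai + b)/(ci + d). Then the image of the nilpotent cone under ω is the whole upper half-plane: ω(𝒩_ℝ) = ℍ. Equivalently, for every τ ∈ ℍ there exists a nilpotent matrix N ∈ 𝔰𝔩(2,ℝ) such that exp(N) maps i to τ under the Möbius action. -/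
open NormedSpace Matrix UpperHalfPlane
open scoped MatrixGroups

/-! A nilpotent `N ∈ 𝔰𝔩(2,ℝ)` has `N ^ 2 = 0`, so `exp N = 1 + N` lies in `SL(2,ℝ)` and moves `i`
into `ℍ`. Conversely, the `g ∈ SL(2,ℝ)` with `g • i = τ` are parametrised by their bottom row
`(c, d)`, which runs over the circle `τ.im * (c ^ 2 + d ^ 2) = 1`, and `trace g` is linear in
`(c, d)`. The line `trace g = 2` meets this circle because `4 τ.im ≤ τ.re ^ 2 + (τ.im + 1) ^ 2`,
and for such a unipotent `g` Cayley–Hamilton gives `(g - 1) ^ 2 = 0`, hence `exp (g - 1) = g`. -/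

theorem Matrix.pow_card_eq_zero_of_isNilpotent {n R : Type*} [Fintype n] [DecidableEq n]
    [CommRing R] [IsReduced R] {M : Matrix n n R} (hM : IsNilpotent M) :
    M ^ Fintype.card n = 0 := by
  have hχ : M.charpoly = Polynomial.X ^ Fintype.card n := by
    refine sub_eq_zero.mp (Polynomial.ext fun i ↦ ?_)
    exact (Polynomial.isNilpotent_iff.mp (isNilpotent_charpoly_sub_pow_of_isNilpotent hM) i).eq_zero
  simpa [hχ] using M.aeval_self_charpoly

theorem Matrix.det_eq_zero_of_isNilpotent {n R : Type*} [Fintype n] [DecidableEq n] [Nonempty n]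
    [CommRing R] [IsReduced R] {M : Matrix n n R} (hM : IsNilpotent M) : det M = 0 := by
  obtain ⟨k, hk⟩ := hM
  exact IsNilpotent.eq_zero ⟨k, by rw [← det_pow, hk, det_zero]⟩

theorem NormedSpace.exp_eq_one_add_of_sq_eq_zero {𝔸 : Type*} [Ring 𝔸] [Algebra ℚ 𝔸]
    [TopologicalSpace 𝔸] [IsTopologicalRing 𝔸] {a : 𝔸} (ha : a ^ 2 = 0) : exp a = 1 + a := by
  rw [congrFun exp_eq_tsum_rat a, tsum_eq_sum (s := Finset.range 2)]
  · simp [Finset.sum_range_succ]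
  · intro n hn
    simp [pow_eq_zero_of_le (not_lt.mp (Finset.mem_range.not.mp hn)) ha]

theorem Matrix.sq_eq_trace_smul_sub_det_smul_fin_two {R : Type*} [CommRing R]
    (M : Matrix (Fin 2) (Fin 2) R) : M ^ 2 = trace M • M - det M • 1 := by
  nontriviality R
  have := M.aeval_self_charpoly
  rw [charpoly_fin_two] at this
  simp only [map_sub, map_add, map_mul, map_pow, Polynomial.aeval_X, Polynomial.aeval_C,
    Algebra.algebraMap_eq_smul_one, smul_mul_assoc, one_mul] at this
  rw [← sub_eq_zero, ← this]
  abel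

theorem Matrix.sq_sub_one_eq_zero_of_det_eq_one_of_trace_eq_two {R : Type*} [CommRing R]
    {M : Matrix (Fin 2) (Fin 2) R} (hdet : det M = 1) (htr : trace M = 2) : (M - 1) ^ 2 = 0 := by
  rw [sq, sub_mul, mul_sub, mul_sub, ← sq, sq_eq_trace_smul_sub_det_smul_fin_two, hdet, htr]
  simp only [one_smul, mul_one, one_mul, two_smul]
  abel

theorem Matrix.det_one_add_fin_two {R : Type*} [CommRing R] (M : Matrix (Fin 2) (Fin 2) R) :
    det (1 + M) = 1 + trace M + det M := by
  simp [det_fin_two, trace_fin_two]; ring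

theorem UpperHalfPlane.coe_specialLinearGroup_smul_I (g : SL(2, ℝ)) :
    ((g • I : ℍ) : ℂ) = ((g 0 0 : ℂ) * Complex.I + g 0 1) / (g 1 0 * Complex.I + g 1 1) := by
  simp [coe_specialLinearGroup_apply]

theorem exists_sq_add_sq_eq_of_sq_le {a b r s : ℝ} (hab : 0 < a ^ 2 + b ^ 2)
    (h : s ^ 2 ≤ r * (a ^ 2 + b ^ 2)) : ∃ c d : ℝ, c ^ 2 + d ^ 2 = r ∧ a * c + b * d = s := by
  -- the foot of the perpendicular from the origin, shifted along the line by `t`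
  set t := Real.sqrt (r * (a ^ 2 + b ^ 2) - s ^ 2)
  have ht : t ^ 2 = r * (a ^ 2 + b ^ 2) - s ^ 2 := Real.sq_sqrt (by linarith)
  refine ⟨(s * a - t * b) / (a ^ 2 + b ^ 2), (s * b + t * a) / (a ^ 2 + b ^ 2), ?_, ?_⟩
  · field_simp
    linear_combination (a ^ 2 + b ^ 2) * ht
  · field_simp
    ring

theorem UpperHalfPlane.exists_trace_eq_two_smul_I_eq (τ : ℍ) :
    ∃ g : SL(2, ℝ), trace (g : Matrix (Fin 2) (Fin 2) ℝ) = 2 ∧ g • I = τ := by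
  obtain ⟨c, d, hcirc, hline⟩ :
      ∃ c d : ℝ, c ^ 2 + d ^ 2 = τ.im⁻¹ ∧ τ.re * c + (τ.im + 1) * d = 2 := by
    refine exists_sq_add_sq_eq_of_sq_le (by nlinarith [τ.im_pos]) ?_
    rw [le_inv_mul_iff₀ τ.im_pos]
    nlinarith [sq_nonneg (τ.im - 1), sq_nonneg τ.re]
  have hdet : τ.im * (c ^ 2 + d ^ 2) = 1 := by rw [hcirc, mul_inv_cancel₀ τ.im_ne_zero]
  let g : SL(2, ℝ) := ⟨!![τ.re * c + τ.im * d, τ.re * d - τ.im * c; c, d], by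
    rw [det_fin_two_of]; linear_combination hdet⟩
  refine ⟨g, by rw [← hline]; simp [g, trace_fin_two]; ring, ?_⟩
  ext1
  rw [coe_specialLinearGroup_smul_I, div_eq_iff]
  · simp only [g, of_apply, cons_val', cons_val_zero, cons_val_one, cons_val_fin_one,
      Complex.ofReal_add, Complex.ofReal_sub, Complex.ofReal_mul]
    rw [← τ.re_add_im]
    linear_combination (-(τ.im : ℂ) * c) * Complex.I_sq
  · simpa [denom] using denom_ne_zero g I

open NormedSpace in
/-- The image of the nilpotent cone `𝒩_ℝ ⊆ 𝔰𝔩(2,ℝ)` under `ω = φ ∘ exp` is the whole upper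
half-plane `ℍ`, where `exp` is the matrix exponential and `φ(g) = (ai + b)/(ci + d)` for `g`
with rows `(a, b)` and `(c, d)`; i.e. for every `τ` with `Im τ > 0` there is a nilpotent
`N ∈ 𝔰𝔩(2,ℝ)` with `exp(N)·i = τ`. -/
theorem omega_image_nilpotentCone :
    {w : ℂ | ∃ N : Matrix (Fin 2) (Fin 2) ℝ, Matrix.trace N = 0 ∧ IsNilpotent N ∧
      w = (((exp N) 0 0 : ℝ) * Complex.I + ((exp N) 0 1 : ℝ)) /
          (((exp N) 1 0 : ℝ) * Complex.I + ((exp N) 1 1 : ℝ))} =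
    {τ : ℂ | 0 < τ.im} := by
  ext w
  constructor
  · rintro ⟨N, htr, hnil, rfl⟩
    have hN2 : N ^ 2 = 0 := by simpa using pow_card_eq_zero_of_isNilpotent hnil
    let g : SL(2, ℝ) := ⟨1 + N, by
      rw [det_one_add_fin_two, htr, det_eq_zero_of_isNilpotent hnil, add_zero, add_zero]⟩
    rw [exp_eq_one_add_of_sq_eq_zero hN2]
    have h := (g • I).im_pos
    rw [← coe_im, coe_specialLinearGroup_smul_I] at h
    simpa [g] using h
  · intro hw
    obtain ⟨g, htr, hg⟩ := exists_trace_eq_two_smul_I_eq ⟨w, hw⟩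
    have hN2 := sq_sub_one_eq_zero_of_det_eq_one_of_trace_eq_two g.det_coe htr
    refine ⟨g - 1, by simp [htr], ⟨2, hN2⟩, ?_⟩
    rw [exp_eq_one_add_of_sq_eq_zero hN2, add_sub_cancel, ← coe_specialLinearGroup_smul_I, hg]
end
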